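/- Consider the 2×2 ODE system d/dt (A, V) = M_ρ (A, V) where M_ρ = [[0, −ρ], [ρ, −ρ²]] and ρ ≥ 0. Define the Lyapunov functional L_ρ² = 2|(A,V)|² + |ρA|² − 2ρ Re(A V̄). Then along solutions, (1/2) d/dt L_ρ² + ρ² |(A,V)|² = 0, and there exists a universal constant C₀ > 0 (independent of ρ) such that C₀^{-1} L_ρ² ≤ |A|² + |ρA|² + |V|² ≤ C₀ L_ρ². -/

import Mathlib

/-!
On `ℂ` viewed as a real inner product space, `Re(A V̄) = ⟪A, V⟫_ℝ`, so `L_ρ²` is a quadratic form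
in `(A, V)` which makes sense in any real inner product space. Differentiating along the flow of
`M_ρ`, the cross terms `±ρ⟪A, V⟫` and `±ρ³⟪A, V⟫` cancel and only the damping `−2ρ²(‖A‖² + ‖V‖²)`
is left. The equivalence with `‖A‖² + ρ²‖A‖² + ‖V‖²` (with constant `3`) only needs
Cauchy–Schwarz and the AM–GM bounds `2|ρ|‖A‖‖V‖ ≤ ρ²‖A‖² + ‖V‖²` and
`6|ρ|‖A‖‖V‖ ≤ 2ρ²‖A‖² + 9/2 ‖V‖²`.
-/

open Complex
open scoped RealInnerProductSpace

noncomputable section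

/-- The Lyapunov functional `L_ρ² = 2|(A,V)|² + |ρA|² − 2ρ Re(A V̄)`. -/
def lyapunovSq (ρ : ℝ) (A V : ℝ → ℂ) (t : ℝ) : ℝ :=
  2 * (‖A t‖ ^ 2 + ‖V t‖ ^ 2) + ρ ^ 2 * ‖A t‖ ^ 2 -
    2 * ρ * (A t * (starRingEnd ℂ) (V t)).re

section InnerProductSpace

variable {E : Type*} [NormedAddCommGroup E] [InnerProductSpace ℝ E]

def lyapunovForm (ρ : ℝ) (a v : E) : ℝ :=
  2 * (‖a‖ ^ 2 + ‖v‖ ^ 2) + ρ ^ 2 * ‖a‖ ^ 2 - 2 * ρ * ⟪a, v⟫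

theorem hasDerivAt_lyapunovForm {ρ t : ℝ} {A V : ℝ → E}
    (hA : HasDerivAt A (-ρ • V t) t) (hV : HasDerivAt V (ρ • A t - ρ ^ 2 • V t) t) :
    HasDerivAt (fun s => lyapunovForm ρ (A s) (V s))
      (-2 * ρ ^ 2 * (‖A t‖ ^ 2 + ‖V t‖ ^ 2)) t := by
  refine (((hA.norm_sq.add hV.norm_sq).const_mul 2).add (hA.norm_sq.const_mul (ρ ^ 2))
    |>.sub ((hA.inner ℝ hV).const_mul (2 * ρ))).congr_deriv ?_
  simp only [inner_sub_right, inner_smul_right, inner_smul_left,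
    real_inner_self_eq_norm_sq, real_inner_comm (A t) (V t), RCLike.conj_to_real]
  ring

theorem abs_mul_real_inner_le (ρ : ℝ) (a v : E) : |ρ * ⟪a, v⟫| ≤ |ρ| * ‖a‖ * ‖v‖ :=
  calc |ρ * ⟪a, v⟫| = |ρ| * |⟪a, v⟫| := abs_mul ρ _
    _ ≤ |ρ| * (‖a‖ * ‖v‖) := by gcongr; exact abs_real_inner_le_norm a v
    _ = |ρ| * ‖a‖ * ‖v‖ := (mul_assoc _ _ _).symm

theorem lyapunovForm_le (ρ : ℝ) (a v : E) :
    lyapunovForm ρ a v ≤ 3 * (‖a‖ ^ 2 + ρ ^ 2 * ‖a‖ ^ 2 + ‖v‖ ^ 2) := by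
  have := neg_le_of_abs_le (abs_mul_real_inner_le ρ a v)
  rw [lyapunovForm]
  nlinarith [sq_nonneg (|ρ| * ‖a‖ - ‖v‖), sq_abs ρ]

theorem le_three_mul_lyapunovForm (ρ : ℝ) (a v : E) :
    ‖a‖ ^ 2 + ρ ^ 2 * ‖a‖ ^ 2 + ‖v‖ ^ 2 ≤ 3 * lyapunovForm ρ a v := by
  have := le_of_abs_le (abs_mul_real_inner_le ρ a v)
  rw [lyapunovForm]
  nlinarith [sq_nonneg (2 * |ρ| * ‖a‖ - 3 * ‖v‖), sq_abs ρ]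

end InnerProductSpace

theorem lyapunovSq_eq_lyapunovForm (ρ : ℝ) (A V : ℝ → ℂ) :
    lyapunovSq ρ A V = fun t => lyapunovForm ρ (A t) (V t) := by
  funext t
  rw [lyapunovSq, lyapunovForm, real_inner_comm, Complex.inner]

/-- **Lyapunov identity and uniform equivalence for the linearized mode system.**
If `d/dt (A,V) = M_ρ (A,V)` with `M_ρ = [[0, −ρ], [ρ, −ρ²]]`, then
`(1/2) d/dt L_ρ² + ρ² |(A,V)|² = 0` and, for a universal constant `C₀ > 0` independent of `ρ`,
`C₀⁻¹ L_ρ² ≤ |A|² + |ρA|² + |V|² ≤ C₀ L_ρ²`. -/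
theorem lyapunov_identity_and_equivalence :
    ∃ C₀ : ℝ, 0 < C₀ ∧
      ∀ ρ : ℝ, 0 ≤ ρ → ∀ A V : ℝ → ℂ,
        (∀ t, HasDerivAt A (-(ρ : ℂ) * V t) t) →
        (∀ t, HasDerivAt V ((ρ : ℂ) * A t - (ρ : ℂ) ^ 2 * V t) t) →
        ∀ t : ℝ,
          HasDerivAt (lyapunovSq ρ A V)
            (-2 * ρ ^ 2 * (‖A t‖ ^ 2 + ‖V t‖ ^ 2)) t ∧
          C₀⁻¹ * lyapunovSq ρ A V t ≤
            ‖A t‖ ^ 2 + ρ ^ 2 * ‖A t‖ ^ 2 +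
              ‖V t‖ ^ 2 ∧
          ‖A t‖ ^ 2 + ρ ^ 2 * ‖A t‖ ^ 2 + ‖V t‖ ^ 2 ≤
            C₀ * lyapunovSq ρ A V t := by
  refine ⟨3, by norm_num, fun ρ _ A V hA hV t => ⟨?_, ?_, ?_⟩⟩ <;>
    rw [lyapunovSq_eq_lyapunovForm]
  · apply hasDerivAt_lyapunovForm
    · simpa only [Complex.real_smul, ofReal_neg] using hA t
    · simpa only [Complex.real_smul, ofReal_pow] using hV t
  · rw [inv_mul_le_iff₀ three_pos]
    exact lyapunovForm_le ρ (A t) (V t)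
  · exact le_three_mul_lyapunovForm ρ (A t) (V t)
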